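/- Let S = U ++ [b] ++ V be a string in which b does not occur in V and V is nonempty (so the displayed occurrence of b is the last occurrence of b in S, and it is not the last character of S). Then for every string T, the Levenshtein edit distance satisfies lev(S, T ++ [b]) = min( 1 + lev(S, T), |V| + lev(U, T), 1 + lev(S.dropLast, T) ), corresponding respectively to inserting b, to deleting the suffix V and matching b with its last occurrence in S, and to replacing the last character of S by b. -/

import Mathlib

section LevenshteinDefs

variable {α β δ : Type*} [AddZeroClass δ] [Min δ]

namespace Levenshtein

structure Cost (α β δ : Type*) where
  delete : α → δ
  insert : β → δ
  substitute : α → β → δ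

def defaultCost [DecidableEq α] : Cost α α ℕ where
  delete _ := 1
  insert _ := 1
  substitute a b := if a = b then 0 else 1

variable (C : Cost α β δ)

def impl
    (xs : List α) (y : β) (d : {r : List δ // 0 < r.length}) : {r : List δ // 0 < r.length} :=
  let ⟨ds, w⟩ := d
  xs.zip (ds.zip ds.tail) |>.foldr
    (init := ⟨[C.insert y + ds.getLast (List.length_pos_iff.mp w)], by simp⟩)
    (fun ⟨x, d₀, d₁⟩ ⟨r, w⟩ =>
      ⟨min (C.delete x + r[0]) (min (C.insert y + d₀) (C.substitute x y + d₁)) :: r, by simp⟩)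

end Levenshtein

open Levenshtein

variable (C : Cost α β δ)

def suffixLevenshtein (xs : List α) (ys : List β) : {r : List δ // 0 < r.length} :=
  ys.foldr
    (impl C xs)
    (xs.foldr (init := ⟨[0], by simp⟩) (fun a ⟨r, w⟩ => ⟨(C.delete a + r[0]) :: r, by simp⟩))

def levenshtein (xs : List α) (ys : List β) : δ :=
  let ⟨r, w⟩ := suffixLevenshtein C xs ys
  r[0]

end LevenshteinDefs

/-! Peel letters off the right end of the strings: the last step of an optimal alignment of
`U ++ [b] ++ V` with `T ++ [b]` deletes the last letter of the source, inserts `b`, or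
substitutes the last letter by `b`. Induct on `V` from the right. While the last letter lies in
`V` it differs from `b`, so all three steps cost one and deleting it feeds the induction
hypothesis; once `V` is used up, `b` is matched with `b` for free. The crude bounds
`lev (xs ++ [x]) ys ≤ lev xs ys + 1` and `lev xs ys ≤ lev xs (ys ++ [y]) + 1` dispose of the
alternatives that never attain the minimum. -/

namespace Levenshtein

variable {α β δ : Type*} [AddZeroClass δ] [Min δ] (C : Cost α β δ)

theorem impl_cons {x : α} {xs : List α} {y : β} {d : δ} {ds : List δ} {w}
    (w' : 0 < ds.length) :
    (impl C (x :: xs) y ⟨d :: ds, w⟩).1 =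
      min (C.delete x + (impl C xs y ⟨ds, w'⟩).1[0]'(impl C xs y _).2)
        (min (C.insert y + d) (C.substitute x y + ds[0])) :: (impl C xs y ⟨ds, w'⟩).1 :=
  match ds, w' with | _ :: _, _ => rfl

theorem impl_length {xs : List α} {y : β} {d : {r : List δ // 0 < r.length}}
    (h : d.1.length = xs.length + 1) : (impl C xs y d).1.length = xs.length + 1 := by
  induction xs generalizing d with
  | nil => rfl
  | cons x xs ih =>
    rcases d with ⟨_ | ⟨d, _ | ⟨d', ds⟩⟩, _⟩ <;> simp at h
    rw [impl_cons C (by simp)]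
    simpa using ih (d := ⟨d' :: ds, by simp⟩) (by simpa using h)

end Levenshtein

open Levenshtein

section GeneralCost

variable {α β δ : Type*} [AddZeroClass δ] [Min δ] (C : Cost α β δ)

theorem suffixLevenshtein_length (xs : List α) (ys : List β) :
    (suffixLevenshtein C xs ys).1.length = xs.length + 1 := by
  induction ys with
  | nil => induction xs <;> simp_all [suffixLevenshtein]
  | cons y ys ih => exact impl_length C ih

theorem suffixLevenshtein_cons_left (x : α) (xs : List α) (ys : List β) :
    suffixLevenshtein C (x :: xs) ys =
      ⟨levenshtein C (x :: xs) ys :: (suffixLevenshtein C xs ys).1, by simp⟩ := by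
  induction ys with
  | nil => rfl
  | cons y ys ih =>
    apply Subtype.ext
    rw [← List.drop_zero (l := (suffixLevenshtein C (x :: xs) (y :: ys)).1),
      ← List.getElem_cons_drop (i := 0) (suffixLevenshtein C _ _).2]
    congr 1
    show ((impl C (x :: xs) y (suffixLevenshtein C (x :: xs) ys)).1).drop 1 = _
    simp only [ih, impl_cons C (suffixLevenshtein C xs ys).2, List.drop_succ_cons,
      List.drop_zero]
    rfl

theorem levenshtein_cons_cons (x : α) (xs : List α) (y : β) (ys : List β) :
    levenshtein C (x :: xs) (y :: ys) =
      min (C.delete x + levenshtein C xs (y :: ys))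
        (min (C.insert y + levenshtein C (x :: xs) ys)
          (C.substitute x y + levenshtein C xs ys)) := by
  show (impl C (x :: xs) y (suffixLevenshtein C (x :: xs) ys)).1[0]'(impl C _ _ _).2 = _
  simp only [suffixLevenshtein_cons_left, impl_cons C (suffixLevenshtein C xs ys).2]
  rfl

theorem levenshtein_nil_cons (y : β) (ys : List β) :
    levenshtein C [] (y :: ys) = C.insert y + levenshtein C [] ys := by
  obtain ⟨d, hd⟩ := List.length_eq_one_iff.mp (suffixLevenshtein_length C [] ys)
  show C.insert y + (suffixLevenshtein C [] ys).1.getLast _ =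
    C.insert y + (suffixLevenshtein C [] ys).1[0]'(suffixLevenshtein C [] ys).2
  simp [hd]

theorem levenshtein_cons_nil (x : α) (xs : List α) :
    levenshtein C (x :: xs) [] = C.delete x + levenshtein C xs [] :=
  rfl

theorem levenshtein_nil_nil : levenshtein C [] [] = 0 :=
  rfl

end GeneralCost

section NatCost

variable {α β : Type*} (C : Cost α β ℕ)

theorem levenshtein_append_singleton_nil (xs : List α) (x : α) :
    levenshtein C (xs ++ [x]) [] = C.delete x + levenshtein C xs [] := by
  induction xs with
  | nil => rfl
  | cons w xs ih => simp only [List.cons_append, levenshtein_cons_nil, ih, Nat.add_left_comm]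

theorem levenshtein_nil_append_singleton (ys : List β) (y : β) :
    levenshtein C [] (ys ++ [y]) = C.insert y + levenshtein C [] ys := by
  induction ys with
  | nil => simp [levenshtein_nil_cons, levenshtein_nil_nil]
  | cons z ys ih => simp only [List.cons_append, levenshtein_nil_cons, ih, Nat.add_left_comm]

theorem levenshtein_append_singleton_append_singleton (xs : List α) (x : α) (ys : List β)
    (y : β) :
    levenshtein C (xs ++ [x]) (ys ++ [y]) =
      min (C.delete x + levenshtein C xs (ys ++ [y]))
        (min (C.insert y + levenshtein C (xs ++ [x]) ys)
          (C.substitute x y + levenshtein C xs ys)) := by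
  induction xs generalizing ys with
  | nil =>
    induction ys with
    | nil => exact levenshtein_cons_cons C x [] y []
    | cons z ys ih =>
      simp only [List.nil_append, List.cons_append, levenshtein_cons_cons, levenshtein_nil_cons,
        levenshtein_nil_append_singleton] at ih ⊢
      rw [ih]
      simp only [← Nat.add_min_add_left, ← add_assoc]
      ac_rfl
  | cons w xs ih =>
    induction ys with
    | nil =>
      have h := ih []
      simp only [List.nil_append, List.cons_append, levenshtein_cons_cons, levenshtein_cons_nil,
        levenshtein_append_singleton_nil] at h ⊢
      rw [h]
      simp only [← Nat.add_min_add_left, ← add_assoc]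
      ac_rfl
    | cons z ys ih' =>
      have h₁ := ih (z :: ys)
      have h₂ := ih ys
      simp only [List.cons_append, levenshtein_cons_cons] at ih' h₁ h₂ ⊢
      rw [h₁, ih', h₂]
      simp only [← Nat.add_min_add_left, ← add_assoc]
      ac_rfl

theorem levenshtein_append_singleton_le (xs : List α) (x : α) (ys : List β) :
    levenshtein C (xs ++ [x]) ys ≤ C.delete x + levenshtein C xs ys := by
  rcases List.eq_nil_or_concat ys with rfl | ⟨ys, y, rfl⟩
  · exact (levenshtein_append_singleton_nil C xs x).le
  · rw [List.concat_eq_append, levenshtein_append_singleton_append_singleton]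
    exact min_le_left _ _

end NatCost

section DefaultCost

variable {α : Type*} [DecidableEq α]

@[simp] theorem Levenshtein.defaultCost_delete (a : α) :
    (defaultCost : Cost α α ℕ).delete a = 1 :=
  rfl

@[simp] theorem Levenshtein.defaultCost_insert (a : α) :
    (defaultCost : Cost α α ℕ).insert a = 1 :=
  rfl

@[simp] theorem Levenshtein.defaultCost_substitute (a b : α) :
    (defaultCost : Cost α α ℕ).substitute a b = if a = b then 0 else 1 :=
  rfl

theorem levenshtein_le_levenshtein_dropLast_add_one (xs ys : List α) :
    levenshtein defaultCost xs ys ≤ levenshtein defaultCost xs.dropLast ys + 1 := by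
  rcases List.eq_nil_or_concat xs with rfl | ⟨xs, x, rfl⟩
  · exact Nat.le_succ _
  · rw [List.concat_eq_append, List.dropLast_concat, add_comm]
    exact levenshtein_append_singleton_le defaultCost xs x ys

theorem levenshtein_le_levenshtein_append_singleton_add_one (xs ys : List α) (y : α) :
    levenshtein defaultCost xs ys ≤ levenshtein defaultCost xs (ys ++ [y]) + 1 := by
  induction xs using List.reverseRecOn with
  | nil =>
    rw [levenshtein_nil_append_singleton, defaultCost_insert]
    omega
  | append_singleton xs x ih =>
    have hx := levenshtein_append_singleton_le defaultCost xs x ys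
    rw [levenshtein_append_singleton_append_singleton]
    simp only [defaultCost_delete, defaultCost_insert, defaultCost_substitute] at hx ⊢
    split_ifs <;> omega

end DefaultCost

theorem levenshtein_append_last_occurrence_general {α : Type*} [DecidableEq α]
    (U V T : List α) (b : α) (hb : b ∉ V) :
    levenshtein Levenshtein.defaultCost (U ++ [b] ++ V) (T ++ [b]) =
      min (1 + levenshtein Levenshtein.defaultCost (U ++ [b] ++ V) T)
        (min (V.length + levenshtein Levenshtein.defaultCost U T)
          (1 + levenshtein Levenshtein.defaultCost (U ++ [b] ++ V).dropLast T)) := by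
  induction V using List.reverseRecOn with
  | nil =>
    have hUT := levenshtein_le_levenshtein_append_singleton_add_one U T b
    rw [List.append_nil, levenshtein_append_singleton_append_singleton]
    simp only [defaultCost_delete, defaultCost_insert, defaultCost_substitute, ↓reduceIte,
      List.dropLast_concat, List.length_nil]
    omega
  | append_singleton V a ih =>
    have hab : a ≠ b := fun h => hb (by simp [h])
    have hdrop := levenshtein_le_levenshtein_dropLast_add_one (U ++ [b] ++ V) T
    rw [← List.append_assoc, levenshtein_append_singleton_append_singleton,
      ih fun h => hb (List.mem_append_left _ h)]
    simp only [defaultCost_delete, defaultCost_insert, defaultCost_substitute, if_neg hab,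
      List.dropLast_concat, List.length_append, List.length_singleton]
    omega

theorem levenshtein_append_last_occurrence {α : Type*} [DecidableEq α]
    (U V T : List α) (b : α) (hb : b ∉ V) (hV : V ≠ []) :
    levenshtein Levenshtein.defaultCost (U ++ [b] ++ V) (T ++ [b]) =
      min (1 + levenshtein Levenshtein.defaultCost (U ++ [b] ++ V) T)
        (min (V.length + levenshtein Levenshtein.defaultCost U T)
          (1 + levenshtein Levenshtein.defaultCost (U ++ [b] ++ V).dropLast T)) :=
  levenshtein_append_last_occurrence_general U V T b hb
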